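/- Let t > 0, let τ be a finite Borel measure on ℝ with τ({0}) = 0, let ρ : [0,t] → ℝ be continuous with ρ(s) ≠ 0 for all s ∈ [0,t], let D = {x ∈ ℝ : |x| ≤ 1}, and define ν_t on Borel sets B by ν_t(B) = ∫_ℝ ( ∫₀ᵗ 1_B(y·ρ(t−s)) ds ) τ(dy). Then for every z ∈ ℝ, ∫₀ᵗ ∫_ℝ (e^{iz·ρ(t−s)·y} − 1) τ(dy) ds = ∫_ℝ (e^{izx} − 1 − izx·1_D(x)) ν_t(dx) + i·∫₀ᵗ ∫_ℝ z·y·ρ(t−s)·1_D(y·ρ(t−s)) τ(dy) ds. -/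

import Mathlib

open MeasureTheory ENNReal

/-!
`ν_t` is the image of `τ ⊗ Leb|[0,t]` under `(y, s) ↦ y ρ(t - s)`. Changing variables turns
the Lévy–Khintchine integral against `ν_t` into an integral over the product, where the identity
is the pointwise splitting `e^{izx} - 1 = (e^{izx} - 1 - izx 1_D(x)) + izx 1_D(x)`; every term
is bounded, hence integrable for the finite product measure, and Fubini turns the product
integrals back into the iterated ones.
-/

/-- Indicator (as a real-valued function) of the set `D = {x : |x| ≤ 1}`. -/
noncomputable def indD (x : ℝ) : ℝ :=
  Set.indicator {y : ℝ | |y| ≤ 1} (fun _ => (1 : ℝ)) x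

lemma measurable_indD : Measurable indD :=
  measurable_const.indicator (isClosed_le continuous_abs continuous_const).measurableSet

lemma abs_mul_indD_le (x : ℝ) : |x * indD x| ≤ 1 := by
  by_cases h : |x| ≤ 1 <;> simp [indD, h]

lemma norm_exp_I_mul_ofReal_sub_one_le_two (x : ℝ) :
    ‖Complex.exp (Complex.I * x) - 1‖ ≤ 2 :=
  (norm_sub_le _ _).trans (by rw [Complex.norm_exp_I_mul_ofReal, norm_one]; norm_num)

section Integrals

variable {α : Type*} [MeasurableSpace α] (μ : Measure α) [IsFiniteMeasure μ]
  {f : α → ℝ} (hf : Measurable f) (z : ℝ)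
include hf

lemma integrable_exp_I_mul_sub_one :
    Integrable (fun a => Complex.exp (Complex.I * z * f a) - 1) μ := by
  refine .of_bound (by fun_prop) 2 (ae_of_all _ fun a => ?_)
  simpa [mul_assoc] using norm_exp_I_mul_ofReal_sub_one_le_two (z * f a)

lemma integrable_mul_indD :
    Integrable (fun a => z * f a * indD (f a)) μ := by
  refine .of_bound ((measurable_const.mul hf).mul (measurable_indD.comp hf)).aestronglyMeasurable
    |z| (ae_of_all _ fun a => ?_)
  rw [Real.norm_eq_abs, mul_assoc, abs_mul]
  exact mul_le_of_le_one_right (abs_nonneg z) (abs_mul_indD_le _)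

theorem integral_exp_I_mul_sub_one_eq_integral_map :
    ∫ a, (Complex.exp (Complex.I * z * f a) - 1) ∂μ =
      (∫ x, (Complex.exp (Complex.I * z * x) - 1 - Complex.I * z * x * (indD x : ℂ)) ∂μ.map f) +
        Complex.I * ((∫ a, z * f a * indD (f a) ∂μ : ℝ) : ℂ) := by
  have hG : Measurable fun x : ℝ =>
      Complex.exp (Complex.I * z * x) - 1 - Complex.I * z * x * (indD x : ℂ) := by
    have := measurable_indD; fun_prop
  have hR : Integrable (fun a => Complex.I * ((z * f a * indD (f a) : ℝ) : ℂ)) μ :=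
    (integrable_mul_indD μ hf z).ofReal.const_mul _
  rw [integral_map hf.aemeasurable hG.aestronglyMeasurable, ← integral_complex_ofReal,
    ← integral_const_mul, ← integral_add]
  · congr 1 with a
    push_cast
    ring
  · refine ((integrable_exp_I_mul_sub_one μ hf z).sub hR).congr (ae_of_all _ fun a => ?_)
    simp only [Pi.sub_apply]
    push_cast
    ring
  · exact hR

end Integrals

theorem map_prod_eq_of_lintegral_indicator {α β γ : Type*} [MeasurableSpace α]
    [MeasurableSpace β] [MeasurableSpace γ] {σ : Measure β} {τ : Measure α} [SFinite σ]
    [SFinite τ] {F : β × α → γ} (hF : Measurable F) {ν : Measure γ}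
    (hν : ∀ B, MeasurableSet B →
      ν B = ∫⁻ y, ∫⁻ s, B.indicator (fun _ => (1 : ℝ≥0∞)) (F (s, y)) ∂σ ∂τ) :
    ν = (σ.prod τ).map F := by
  ext B hB
  rw [hν B hB, Measure.map_apply hF hB, Measure.prod_apply_symm (hF hB)]
  refine lintegral_congr fun y => ?_
  rw [← lintegral_indicator_one (measurable_prodMk_right (hF hB))]
  rfl

theorem integral_integral_exp_I_mul_sub_one {β : Type*} [MeasurableSpace β] (σ : Measure β)
    (τ : Measure ℝ) [IsFiniteMeasure σ] [IsFiniteMeasure τ] {φ : β → ℝ} (hφ : Measurable φ)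
    (z : ℝ) :
    ∫ s, ∫ y, (Complex.exp (Complex.I * z * φ s * y) - 1) ∂τ ∂σ =
      (∫ x, (Complex.exp (Complex.I * z * x) - 1 - Complex.I * z * x * (indD x : ℂ))
          ∂(σ.prod τ).map (fun p => p.2 * φ p.1)) +
        Complex.I * ((∫ s, ∫ y, z * y * φ s * indD (y * φ s) ∂τ ∂σ : ℝ) : ℂ) := by
  have hf : Measurable fun p : β × ℝ => p.2 * φ p.1 := by fun_prop
  calc ∫ s, ∫ y, (Complex.exp (Complex.I * z * φ s * y) - 1) ∂τ ∂σ
      = ∫ p, (Complex.exp (Complex.I * z * (p.2 * φ p.1 : ℝ)) - 1) ∂σ.prod τ := by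
        rw [integral_prod _ (integrable_exp_I_mul_sub_one _ hf z)]
        congr 1 with s
        congr 1 with y
        congr 2
        push_cast
        ring
    _ = _ := integral_exp_I_mul_sub_one_eq_integral_map _ hf z
    _ = _ := by
        rw [integral_prod _ (integrable_mul_indD _ hf z)]
        congr 4 with s
        congr 1 with y
        ring

lemma intervalIntegral_eq_setIntegral_Icc_of_eqOn {E : Type*} [NormedAddCommGroup E]
    [NormedSpace ℝ E] {a b : ℝ} (hab : a ≤ b) {F G : ℝ → E} (h : Set.EqOn F G (Set.Icc a b)) :
    ∫ s in a..b, F s = ∫ s in Set.Icc a b, G s := by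
  rw [intervalIntegral.integral_of_le hab, ← integral_Icc_eq_integral_Ioc]
  exact setIntegral_congr_fun measurableSet_Icc h

theorem stmt_9_general (t : ℝ) (ht : 0 < t)
    (τ : Measure ℝ) [IsFiniteMeasure τ]
    (ρ : ℝ → ℝ) (hρc : ContinuousOn ρ (Set.Icc 0 t))
    (ν : Measure ℝ)
    (hν : ∀ B : Set ℝ, MeasurableSet B →
      ν B = ∫⁻ y, (∫⁻ s in Set.Icc (0:ℝ) t,
        B.indicator (fun _ => (1 : ℝ≥0∞)) (y * ρ (t - s))) ∂τ) :
    ∀ z : ℝ,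
      (∫ s in (0:ℝ)..t,
        ∫ y, (Complex.exp (Complex.I * (z : ℂ) * (ρ (t - s) : ℂ) * (y : ℂ)) - 1) ∂τ) =
      (∫ x, (Complex.exp (Complex.I * (z : ℂ) * (x : ℂ)) - 1 -
          Complex.I * (z : ℂ) * (x : ℂ) * (indD x : ℂ)) ∂ν) +
        Complex.I * ((∫ s in (0:ℝ)..t,
          ∫ y, z * y * ρ (t - s) * indD (y * ρ (t - s)) ∂τ : ℝ) : ℂ) := by
  intro z
  -- only `ρ` on `[0, t]` matters; extending it continuously makes the integrands measurable
  obtain ⟨ρ', hρ'c, hρ'⟩ : ∃ ρ' : ℝ → ℝ, Continuous ρ' ∧ Set.EqOn ρ ρ' (Set.Icc 0 t) :=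
    ⟨Set.IccExtend ht.le ((Set.Icc 0 t).domRestrict ρ),
      (continuousOn_iff_continuous_domRestrict.1 hρc).Icc_extend',
      fun x hx => by simp [Set.IccExtend_of_mem ht.le _ hx]⟩
  have hρt : ∀ s ∈ Set.Icc 0 t, ρ (t - s) = ρ' (t - s) := fun s hs =>
    hρ' ⟨by linarith [hs.2], by linarith [hs.1]⟩
  have hνσ : ν = ((volume.restrict (Set.Icc 0 t)).prod τ).map fun p => p.2 * ρ' (t - p.1) := by
    refine map_prod_eq_of_lintegral_indicator (by fun_prop) fun B hB => ?_
    rw [hν B hB]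
    exact lintegral_congr fun y =>
      setLIntegral_congr_fun measurableSet_Icc fun s hs => by rw [hρt s hs]
  have hLHS : ∫ s in (0:ℝ)..t,
        ∫ y, (Complex.exp (Complex.I * z * (ρ (t - s) : ℂ) * y) - 1) ∂τ =
      ∫ s in Set.Icc 0 t, ∫ y, (Complex.exp (Complex.I * z * (ρ' (t - s) : ℂ) * y) - 1) ∂τ :=
    intervalIntegral_eq_setIntegral_Icc_of_eqOn ht.le fun s hs => by simp only [hρt s hs]
  have hDrift : ∫ s in (0:ℝ)..t, ∫ y, z * y * ρ (t - s) * indD (y * ρ (t - s)) ∂τ =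
      ∫ s in Set.Icc 0 t, ∫ y, z * y * ρ' (t - s) * indD (y * ρ' (t - s)) ∂τ :=
    intervalIntegral_eq_setIntegral_Icc_of_eqOn ht.le fun s hs => by simp only [hρt s hs]
  rw [hLHS, hDrift, hνσ]
  exact integral_integral_exp_I_mul_sub_one _ τ (φ := fun s => ρ' (t - s)) (by fun_prop) z

/-- Key intermediate identity (equation (3.9)) in the proof of Theorem 3.2:
`∫₀ᵗ∫(e^{izρ(t−s)y} − 1) τ(dy) ds
  = ∫(e^{izx} − 1 − izx·1_D(x)) ν_t(dx) + i∫₀ᵗ∫ zyρ(t−s)·1_D(yρ(t−s)) τ(dy) ds`. -/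
theorem stmt_9 (t : ℝ) (ht : 0 < t)
    (τ : Measure ℝ) [IsFiniteMeasure τ] (hτ0 : τ {0} = 0)
    (ρ : ℝ → ℝ) (hρc : ContinuousOn ρ (Set.Icc 0 t))
    (hρne : ∀ s ∈ Set.Icc (0:ℝ) t, ρ s ≠ 0)
    (ν : Measure ℝ)
    (hν : ∀ B : Set ℝ, MeasurableSet B →
      ν B = ∫⁻ y, (∫⁻ s in Set.Icc (0:ℝ) t,
        B.indicator (fun _ => (1 : ℝ≥0∞)) (y * ρ (t - s))) ∂τ) :
    ∀ z : ℝ,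
      (∫ s in (0:ℝ)..t,
        ∫ y, (Complex.exp (Complex.I * (z : ℂ) * (ρ (t - s) : ℂ) * (y : ℂ)) - 1) ∂τ) =
      (∫ x, (Complex.exp (Complex.I * (z : ℂ) * (x : ℂ)) - 1 -
          Complex.I * (z : ℂ) * (x : ℂ) * (indD x : ℂ)) ∂ν) +
        Complex.I * ((∫ s in (0:ℝ)..t,
          ∫ y, z * y * ρ (t - s) * indD (y * ρ (t - s)) ∂τ : ℝ) : ℂ) :=
  stmt_9_general t ht τ ρ hρc ν hν
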